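/- arXiv:2106.02060 — 5 statements merged into one kernel-verified Lean document; each statement's English description precedes it below -/
import Mathlib

section
/- Let τ > 0 and suppose there exist 0 < z₁ < z₂ < z₃ such that h(u, τ) > 0 for u ∈ (0, z₁) ∪ (z₂, z₃) and h(u, τ) < 0 for u ∈ (z₁, z₂) ∪ (z₃, ∞). Define H(u) := ∫_{z₂}^{u} h(s, τ)·(δ + γτ/s²) ds, and assume H(z₁) ≤ H(z₃) and ∂h/∂u(z₁, τ) < 0. Suppose M : (z₁, z₂) → (z₂, z₃) satisfies H(M(m)) = H(m) for all m ∈ (z₁, z₂). Then ∫_{m}^{M(m)} (δ + γτ/u²)/√(H(m) − H(u)) du → ∞ as m → z₁⁺. -/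
/-!
Write `φₘ(u) = H(m) − H(u)`. Since `H' = h·w` vanishes to first order at `z₁`, the mean value
theorem gives `φₘ(u) ≤ L (u − z₁)²` for `m ≤ u ≤ m₁`, so the integrand is at least
`δ / (√L (u − z₁))` there, and the integral is at least `(δ / √L) log ((m₁ − z₁) / (m − z₁)) → ∞`.
That this bounds a genuine integral rests on `φₘ` having simple zeros at `m` and `M(m)` (where
`H' ≠ 0`): these are inverse-square-root singularities, hence integrable.
-/

open Set Filter Topology

/-- The nonlinearity `h(u,τ) = u(a₁ − b₁u) − c₁τ − (γτ/u)(a₂ − b₂u − c₂τ/u)`. -/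
noncomputable def hfun (a₁ a₂ b₁ b₂ c₁ c₂ γ : ℝ) (u τ : ℝ) : ℝ :=
  u * (a₁ - b₁ * u) - c₁ * τ - (γ * τ / u) * (a₂ - b₂ * u - c₂ * τ / u)

open MeasureTheory Asymptotics

/-- For `x < 0` both sides vanish: `√x = 0`, and `x ^ (-1/2) = |x| ^ (-1/2) * cos (-π/2)`. -/
lemma inv_sqrt_eq_rpow_neg_half (x : ℝ) : (√x)⁻¹ = x ^ (-(1 / 2) : ℝ) := by
  rcases lt_trichotomy x 0 with hx | rfl | hx
  · rw [Real.sqrt_eq_zero_of_nonpos hx.le, Real.rpow_def_of_neg hx,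
      show -(1 / 2) * Real.pi = -(Real.pi / 2) by ring, Real.cos_neg, Real.cos_pi_div_two,
      mul_zero, inv_zero]
  · simp
  · rw [Real.sqrt_eq_rpow, ← Real.rpow_neg hx.le]

lemma intervalIntegrable_inv_sqrt (a b : ℝ) :
    IntervalIntegrable (fun x => (√x)⁻¹) volume a b := by
  simpa only [inv_sqrt_eq_rpow_neg_half] using
    intervalIntegral.intervalIntegrable_rpow' (a := a) (b := b) (by norm_num)

lemma intervalIntegrable_inv_sqrt_sub (p a b : ℝ) :
    IntervalIntegrable (fun x => (√(x - p))⁻¹) volume a b := by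
  simpa only [sub_add_cancel] using (intervalIntegrable_inv_sqrt (a - p) (b - p)).comp_sub_right p

lemma intervalIntegrable_inv_sqrt_sub_left (p a b : ℝ) :
    IntervalIntegrable (fun x => (√(p - x))⁻¹) volume a b := by
  simpa only [sub_sub_cancel] using (intervalIntegrable_inv_sqrt (p - a) (p - b)).comp_sub_left p

lemma IntervalIntegrable.of_abs_le_of_continuousOn {f g : ℝ → ℝ} {a b : ℝ} (hab : a ≤ b)
    (hg : IntervalIntegrable g volume a b) (hf : ContinuousOn f (Ioo a b))
    (hfg : ∀ u ∈ Ioo a b, |f u| ≤ g u) : IntervalIntegrable f volume a b := by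
  rw [intervalIntegrable_iff_integrableOn_Ioo_of_le hab] at hg ⊢
  exact hg.mono' (hf.aestronglyMeasurable measurableSet_Ioo)
    ((ae_restrict_mem measurableSet_Ioo).mono fun u hu => (Real.norm_eq_abs _).trans_le (hfg u hu))

lemma abs_div_sqrt_le {x y t B c : ℝ} (hx : |x| ≤ B) (hc : 0 < c) (ht : 0 < t) (hy : c * t ≤ y) :
    |x / √y| ≤ B / √c * (√t)⁻¹ := by
  rw [abs_div, abs_of_nonneg (Real.sqrt_nonneg y), ← div_eq_mul_inv, div_div,
    ← Real.sqrt_mul hc.le]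
  exact div_le_div₀ ((abs_nonneg x).trans hx) hx (Real.sqrt_pos.2 (mul_pos hc ht))
    (Real.sqrt_le_sqrt hy)

lemma HasDerivAt.eventually_nhdsGT_mul_sub_lt {f : ℝ → ℝ} {d c p : ℝ} (hf : HasDerivAt f d p)
    (hc : c < d) : ∀ᶠ u in 𝓝[>] p, c * (u - p) < f u - f p := by
  have hslope := (hasDerivAt_iff_tendsto_slope.1 hf).mono_left (nhdsGT_le_nhdsNE p)
  filter_upwards [hslope.eventually_const_lt hc, self_mem_nhdsWithin] with u hu (hpu : p < u)
  rwa [slope_def_field, lt_div_iff₀ (sub_pos.2 hpu)] at hu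

lemma HasDerivAt.eventually_nhdsLT_mul_sub_lt {f : ℝ → ℝ} {d c p : ℝ} (hf : HasDerivAt f d p)
    (hc : d < c) : ∀ᶠ u in 𝓝[<] p, c * (u - p) < f u - f p := by
  have hslope := (hasDerivAt_iff_tendsto_slope.1 hf).mono_left (nhdsLT_le_nhdsNE p)
  filter_upwards [hslope.eventually_lt_const hc, self_mem_nhdsWithin] with u hu (hup : u < p)
  rwa [slope_def_field, div_lt_iff_of_neg (sub_neg.2 hup)] at hu

/-- Near `a` and `b` the function `φ` grows at least linearly, so the integrand is dominated by
`C / √(u - a)` resp. `C / √(b - u)`; in between, `φ` is bounded away from zero. -/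
theorem intervalIntegrable_div_sqrt_of_hasDerivAt {φ w : ℝ → ℝ} {a b da db : ℝ} (hab : a < b)
    (hw : ContinuousOn w (Icc a b)) (hφ : ContinuousOn φ (Icc a b))
    (hφpos : ∀ u ∈ Ioo a b, 0 < φ u) (hφa : φ a = 0) (hφb : φ b = 0)
    (hda : HasDerivAt φ da a) (hdb : HasDerivAt φ db b) (hda₀ : 0 < da) (hdb₀ : db < 0) :
    IntervalIntegrable (fun u => w u / √(φ u)) volume a b := by
  obtain ⟨B, hB⟩ := isCompact_Icc.exists_bound_of_continuousOn hw
  have hwB : ∀ u ∈ Ioo a b, |w u| ≤ B := fun u hu => hB u (Ioo_subset_Icc_self hu)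
  have hcont : ContinuousOn (fun u => w u / √(φ u)) (Ioo a b) :=
    (hw.mono Ioo_subset_Icc_self).div (hφ.mono Ioo_subset_Icc_self).sqrt
      fun u hu => (Real.sqrt_pos.2 (hφpos u hu)).ne'
  have hleft : ∀ᶠ u in 𝓝[>] a, da / 2 * (u - a) < φ u ∧ u < b := by
    filter_upwards [hda.eventually_nhdsGT_mul_sub_lt (half_lt_self hda₀), Ioo_mem_nhdsGT hab]
      with u hu hub
    exact ⟨by rwa [hφa, sub_zero] at hu, hub.2⟩
  obtain ⟨a', ha', hleft'⟩ := mem_nhdsGT_iff_exists_Ioc_subset.1 hleft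
  have ha'b : a' < b := (hleft' ⟨ha', le_rfl⟩).2
  have hright : ∀ᶠ u in 𝓝[<] b, -db / 2 * (b - u) < φ u ∧ a' < u := by
    filter_upwards [hdb.eventually_nhdsLT_mul_sub_lt (by linarith : db < db / 2),
      Ioo_mem_nhdsLT ha'b] with u hu hau
    rw [hφb, sub_zero] at hu
    exact ⟨by linarith, hau.1⟩
  obtain ⟨b', hb', hright'⟩ := mem_nhdsLT_iff_exists_Ico_subset.1 hright
  have ha'b' : a' < b' := (hright' ⟨le_rfl, hb'⟩).2
  have hI₁ : IntervalIntegrable (fun u => w u / √(φ u)) volume a a' := by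
    refine .of_abs_le_of_continuousOn ha'.le
      ((intervalIntegrable_inv_sqrt_sub a a a').const_mul (B / √(da / 2)))
      (hcont.mono (Ioo_subset_Ioo_right ha'b.le)) fun u hu => ?_
    exact abs_div_sqrt_le (hwB u ⟨hu.1, hu.2.trans ha'b⟩) (half_pos hda₀) (sub_pos.2 hu.1)
      (hleft' (Ioo_subset_Ioc_self hu)).1.le
  have hI₂ : IntervalIntegrable (fun u => w u / √(φ u)) volume a' b' := by
    refine ContinuousOn.intervalIntegrable (hcont.mono fun u hu => ?_)
    rw [uIcc_of_le ha'b'.le] at hu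
    exact ⟨ha'.trans_le hu.1, hu.2.trans_lt hb'⟩
  have hI₃ : IntervalIntegrable (fun u => w u / √(φ u)) volume b' b := by
    refine .of_abs_le_of_continuousOn hb'.le
      ((intervalIntegrable_inv_sqrt_sub_left b b' b).const_mul (B / √(-db / 2)))
      (hcont.mono (Ioo_subset_Ioo_left (ha'.trans ha'b').le)) fun u hu => ?_
    exact abs_div_sqrt_le (hwB u ⟨(ha'.trans ha'b').trans hu.1, hu.2⟩) (by linarith)
      (sub_pos.2 hu.2) (hright' (Ioo_subset_Ico_self hu)).1.le
  exact hI₁.trans (hI₂.trans hI₃)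

lemma lt_of_hasDerivAt_neg_of_pos {H F : ℝ → ℝ} {z₁ z₂ z₃ m b : ℝ}
    (hH : ∀ u ∈ Ioo z₁ z₃, HasDerivAt H (F u) u)
    (hFneg : ∀ u ∈ Ioo z₁ z₂, F u < 0) (hFpos : ∀ u ∈ Ioo z₂ z₃, 0 < F u)
    (hm : m ∈ Ioo z₁ z₂) (hb : b ∈ Ioo z₂ z₃) (hHb : H b = H m) :
    ∀ u ∈ Ioo m b, H u < H m := by
  have hcont : ContinuousOn H (Icc m b) := fun u hu =>
    (hH u ⟨hm.1.trans_le hu.1, hu.2.trans_lt hb.2⟩).continuousAt.continuousWithinAt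
  have hanti : StrictAntiOn H (Icc m z₂) := by
    refine strictAntiOn_of_hasDerivWithinAt_neg (f' := F) (convex_Icc _ _)
      (hcont.mono (Icc_subset_Icc_right hb.1.le)) (fun u hu => ?_) fun u hu => ?_ <;>
      rw [interior_Icc] at hu
    · exact (hH u ⟨hm.1.trans hu.1, (hu.2.trans hb.1).trans hb.2⟩).hasDerivWithinAt
    · exact hFneg u ⟨hm.1.trans hu.1, hu.2⟩
  have hmono : StrictMonoOn H (Icc z₂ b) := by
    refine strictMonoOn_of_hasDerivWithinAt_pos (f' := F) (convex_Icc _ _)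
      (hcont.mono (Icc_subset_Icc_left hm.2.le)) (fun u hu => ?_) fun u hu => ?_ <;>
      rw [interior_Icc] at hu
    · exact (hH u ⟨hm.1.trans hm.2 |>.trans hu.1, hu.2.trans hb.2⟩).hasDerivWithinAt
    · exact hFpos u ⟨hu.1, hu.2.trans hb.2⟩
  intro u hu
  rcases le_total u z₂ with h | h
  · exact hanti ⟨le_rfl, hm.2.le⟩ ⟨hu.1.le, h⟩ hu.1
  · exact hHb ▸ hmono ⟨h, hu.2.le⟩ ⟨hb.1.le, le_rfl⟩ hu.2

lemma sub_le_mul_sq_of_hasDerivAt {H F : ℝ → ℝ} {z m u L : ℝ} (hzm : z ≤ m) (hmu : m ≤ u)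
    (hH : ∀ s ∈ Icc m u, HasDerivAt H (F s) s) (hF : ∀ s ∈ Icc m u, -F s ≤ L * (s - z))
    (hL : 0 ≤ L) : H m - H u ≤ L * (u - z) ^ 2 := by
  have hslope : -(L * (u - z)) * (u - m) ≤ H u - H m := by
    refine (convex_Icc m u).mul_sub_le_image_sub_of_le_deriv
      (fun s hs => (hH s hs).continuousAt.continuousWithinAt)
      (fun s hs => (hH s (interior_subset hs)).differentiableAt.differentiableWithinAt)
      (fun s hs => ?_) m (left_mem_Icc.2 hmu) u (right_mem_Icc.2 hmu) hmu
    have hs' := interior_subset hs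
    rw [(hH s hs').deriv]
    nlinarith [hF s hs', hs'.2]
  nlinarith [mul_le_mul_of_nonneg_left (by linarith : u - m ≤ u - z)
    (mul_nonneg hL (by linarith : 0 ≤ u - z))]

lemma div_sqrt_mul_inv_le_div_sqrt {x y δ L t : ℝ} (hδ : 0 ≤ δ) (hδx : δ ≤ x) (hL : 0 < L)
    (ht : 0 < t) (hy : 0 < y) (hyt : y ≤ L * t ^ 2) : δ / √L * t⁻¹ ≤ x / √y :=
  calc δ / √L * t⁻¹ = δ / √(L * t ^ 2) := by
        rw [Real.sqrt_mul hL.le, Real.sqrt_sq ht.le, ← div_eq_mul_inv, div_div]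
    _ ≤ δ / √y := div_le_div_of_nonneg_left hδ (Real.sqrt_pos.2 hy) (Real.sqrt_le_sqrt hyt)
    _ ≤ x / √y := div_le_div_of_nonneg_right hδx (Real.sqrt_nonneg _)

lemma tendsto_log_div_sub_atTop {z m₁ : ℝ} (h : z < m₁) :
    Tendsto (fun m => Real.log ((m₁ - z) / (m - z))) (𝓝[>] z) atTop := by
  have hsub : Tendsto (fun m => m - z) (𝓝[>] z) (𝓝[>] 0) :=
    tendsto_nhdsWithin_of_tendsto_nhds_of_eventually_within _
      (((continuous_sub_right z).tendsto' z 0 (sub_self z)).mono_left nhdsWithin_le_nhds)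
      (eventually_mem_nhdsWithin.mono fun m (hm : z < m) => sub_pos.2 hm)
  have := (tendsto_inv_nhdsGT_zero.comp hsub).const_mul_atTop (sub_pos.2 h)
  exact Real.tendsto_log_atTop.comp (by simpa only [div_eq_mul_inv, Function.comp_def] using this)

lemma intervalIntegrable_div_sqrt_sub_of_eq {H F w : ℝ → ℝ} {z₁ z₂ z₃ m b : ℝ}
    (hH : ∀ u ∈ Ioo z₁ z₃, HasDerivAt H (F u) u)
    (hFneg : ∀ u ∈ Ioo z₁ z₂, F u < 0) (hFpos : ∀ u ∈ Ioo z₂ z₃, 0 < F u)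
    (hw : ContinuousOn w (Ioo z₁ z₃)) (hm : m ∈ Ioo z₁ z₂) (hb : b ∈ Ioo z₂ z₃)
    (hHb : H b = H m) : IntervalIntegrable (fun u => w u / √(H m - H u)) volume m b := by
  have hsub : Icc m b ⊆ Ioo z₁ z₃ := Icc_subset_Ioo hm.1 hb.2
  have hmb : m < b := hm.2.trans hb.1
  exact intervalIntegrable_div_sqrt_of_hasDerivAt hmb (hw.mono hsub)
    (continuousOn_const.sub fun u hu => (hH u (hsub hu)).continuousAt.continuousWithinAt)
    (fun u hu => sub_pos.2 (lt_of_hasDerivAt_neg_of_pos hH hFneg hFpos hm hb hHb u hu))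
    (sub_self _) (by rw [hHb, sub_self])
    ((hH m (hsub (left_mem_Icc.2 hmb.le))).const_sub (H m))
    ((hH b (hsub (right_mem_Icc.2 hmb.le))).const_sub (H m))
    (neg_pos.2 (hFneg m hm)) (neg_neg_iff_pos.2 (hFpos b hb))

lemma mul_log_le_integral_div_sqrt_sub {H F w : ℝ → ℝ} {z₁ z₂ z₃ δ L m₁ m b : ℝ}
    (hH : ∀ u ∈ Ioo z₁ z₃, HasDerivAt H (F u) u)
    (hFneg : ∀ u ∈ Ioo z₁ z₂, F u < 0) (hFpos : ∀ u ∈ Ioo z₂ z₃, 0 < F u)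
    (hw : ContinuousOn w (Ioo z₁ z₃)) (hδ : 0 < δ) (hwδ : ∀ u ∈ Ioo z₁ z₃, δ ≤ w u)
    (hL : 0 < L) (hFL : ∀ u ∈ Ioc z₁ m₁, -F u ≤ L * (u - z₁)) (hm₁ : m₁ < z₂)
    (hm : m ∈ Ioo z₁ m₁) (hb : b ∈ Ioo z₂ z₃) (hHb : H b = H m) :
    δ / √L * Real.log ((m₁ - z₁) / (m - z₁)) ≤ ∫ u in m..b, w u / √(H m - H u) := by
  have hmz₂ : m ∈ Ioo z₁ z₂ := ⟨hm.1, hm.2.trans hm₁⟩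
  have hm₁b : m₁ ≤ b := (hm₁.trans hb.1).le
  have hint := intervalIntegrable_div_sqrt_sub_of_eq hH hFneg hFpos hw hmz₂ hb hHb
  have hbound : ∀ u ∈ Ioo m m₁, δ / √L * (u - z₁)⁻¹ ≤ w u / √(H m - H u) := by
    intro u hu
    have hφ : 0 < H m - H u := sub_pos.2
      (lt_of_hasDerivAt_neg_of_pos hH hFneg hFpos hmz₂ hb hHb u ⟨hu.1, hu.2.trans_le hm₁b⟩)
    have hφle : H m - H u ≤ L * (u - z₁) ^ 2 :=
      sub_le_mul_sq_of_hasDerivAt hm.1.le hu.1.le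
        (fun s hs => hH s ⟨hm.1.trans_le hs.1, hs.2.trans_lt (hu.2.trans_le hm₁b |>.trans hb.2)⟩)
        (fun s hs => hFL s ⟨hm.1.trans_le hs.1, hs.2.trans hu.2.le⟩) hL.le
    exact div_sqrt_mul_inv_le_div_sqrt hδ.le
      (hwδ u ⟨hm.1.trans hu.1, hu.2.trans_le hm₁b |>.trans hb.2⟩) hL
      (sub_pos.2 (hm.1.trans hu.1)) hφ hφle
  calc δ / √L * Real.log ((m₁ - z₁) / (m - z₁)) = ∫ u in m..m₁, δ / √L * (u - z₁)⁻¹ := by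
        rw [intervalIntegral.integral_const_mul,
          intervalIntegral.integral_comp_sub_right (fun x => x⁻¹),
          integral_inv_of_pos (sub_pos.2 hm.1) (sub_pos.2 (hm.1.trans hm.2))]
    _ ≤ ∫ u in m..m₁, w u / √(H m - H u) := by
        refine intervalIntegral.integral_mono_on_of_le_Ioo hm.2.le ?_
          (hint.mono_set (uIcc_subset_uIcc_left (Icc_subset_uIcc ⟨hm.2.le, hm₁b⟩))) hbound
        refine (continuousOn_const.mul ((continuousOn_id.sub continuousOn_const).inv₀
          fun u hu => ?_)).intervalIntegrable
        rw [uIcc_of_le hm.2.le] at hu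
        exact (sub_pos.2 (hm.1.trans_le hu.1)).ne'
    _ ≤ ∫ u in m..b, w u / √(H m - H u) := by
        refine intervalIntegral.integral_mono_interval le_rfl hm.2.le hm₁b ?_ hint
        filter_upwards [ae_restrict_mem measurableSet_Ioc] with u hu
        exact div_nonneg (hδ.le.trans (hwδ u ⟨hm.1.trans hu.1, hu.2.trans_lt hb.2⟩))
          (Real.sqrt_nonneg _)

theorem tendsto_integral_div_sqrt_sub_atTop {H F w M : ℝ → ℝ} {z₁ z₂ z₃ δ : ℝ} (hz₁₂ : z₁ < z₂)
    (hH : ∀ u ∈ Ioo z₁ z₃, HasDerivAt H (F u) u)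
    (hFneg : ∀ u ∈ Ioo z₁ z₂, F u < 0) (hFpos : ∀ u ∈ Ioo z₂ z₃, 0 < F u)
    (hF₁ : F =O[𝓝[>] z₁] (· - z₁))
    (hw : ContinuousOn w (Ioo z₁ z₃)) (hδ : 0 < δ) (hwδ : ∀ u ∈ Ioo z₁ z₃, δ ≤ w u)
    (hM : ∀ m ∈ Ioo z₁ z₂, M m ∈ Ioo z₂ z₃ ∧ H (M m) = H m) :
    Tendsto (fun m => ∫ u in m..M m, w u / √(H m - H u)) (𝓝[>] z₁) atTop := by
  obtain ⟨L, hL, hFL⟩ := hF₁.exists_pos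
  obtain ⟨m₁, hm₁, hm₁'⟩ :=
    mem_nhdsGT_iff_exists_Ioc_subset.1 (hFL.bound.and (Ioo_mem_nhdsGT hz₁₂))
  have hm₁z₂ : m₁ < z₂ := (hm₁' ⟨hm₁, le_rfl⟩).2.2
  have hFL' : ∀ u ∈ Ioc z₁ m₁, -F u ≤ L * (u - z₁) := fun u hu => by
    have := (hm₁' hu).1
    rw [Real.norm_eq_abs, Real.norm_eq_abs, abs_of_pos (sub_pos.2 hu.1)] at this
    exact (neg_le_abs _).trans this
  refine tendsto_atTop_mono' _ ?_
    ((tendsto_log_div_sub_atTop hm₁).const_mul_atTop (div_pos hδ (Real.sqrt_pos.2 hL)))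
  filter_upwards [Ioo_mem_nhdsGT hm₁] with m hm
  obtain ⟨hb, hHb⟩ := hM m ⟨hm.1, hm.2.trans hm₁z₂⟩
  exact mul_log_le_integral_div_sqrt_sub hH hFneg hFpos hw hδ hwδ hL hFL' hm₁z₂ hm hb hHb

lemma hasDerivAt_integral_of_continuousOn {F : ℝ → ℝ} {s : Set ℝ} {z u : ℝ} (hs : IsOpen s)
    (hF : ContinuousOn F s) (hzu : uIcc z u ⊆ s) :
    HasDerivAt (fun x => ∫ t in z..x, F t) (F u) u :=
  intervalIntegral.integral_hasDerivAt_right (hF.mono hzu).intervalIntegrable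
    (hF.stronglyMeasurableAtFilter hs u (hzu right_mem_uIcc))
    (hF.continuousAt (hs.mem_nhds (hzu right_mem_uIcc)))

lemma ContinuousAt.eq_zero_of_sign_change {f : ℝ → ℝ} {a : ℝ} (hf : ContinuousAt f a)
    (hl : ∀ᶠ x in 𝓝[<] a, 0 ≤ f x) (hr : ∀ᶠ x in 𝓝[>] a, f x ≤ 0) : f a = 0 :=
  le_antisymm (le_of_tendsto (hf.mono_left nhdsWithin_le_nhds) hr)
    (ge_of_tendsto (hf.mono_left nhdsWithin_le_nhds) hl)

lemma continuousOn_hfun (a₁ a₂ b₁ b₂ c₁ c₂ γ τ : ℝ) :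
    ContinuousOn (fun u => hfun a₁ a₂ b₁ b₂ c₁ c₂ γ u τ) (Ioi 0) := by
  unfold hfun
  fun_prop (disch := exact fun u (hu : 0 < u) => hu.ne')

theorem stmt_12_general (a₁ a₂ b₁ b₂ c₁ c₂ γ δ : ℝ)
    (hγ : 0 < γ) (hδ : 0 < δ)
    (τ : ℝ) (hτ : 0 < τ)
    (z₁ z₂ z₃ : ℝ) (hz₁ : 0 < z₁) (hz₁₂ : z₁ < z₂)
    (hpos : ∀ u : ℝ, u ∈ Ioo 0 z₁ ∪ Ioo z₂ z₃ →
      0 < hfun a₁ a₂ b₁ b₂ c₁ c₂ γ u τ)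
    (hneg : ∀ u : ℝ, u ∈ Ioo z₁ z₂ ∪ Ioi z₃ →
      hfun a₁ a₂ b₁ b₂ c₁ c₂ γ u τ < 0)
    (H : ℝ → ℝ)
    (hH : ∀ u : ℝ, H u = ∫ s in z₂..u,
      hfun a₁ a₂ b₁ b₂ c₁ c₂ γ s τ * (δ + γ * τ / s ^ 2))
    (hu1 : ℝ) (hder : HasDerivAt (fun u => hfun a₁ a₂ b₁ b₂ c₁ c₂ γ u τ) hu1 z₁)
    (M : ℝ → ℝ)
    (hM : ∀ m ∈ Ioo z₁ z₂, M m ∈ Ioo z₂ z₃ ∧ H (M m) = H m) :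
    Tendsto (fun m => ∫ u in m..M m,
        (δ + γ * τ / u ^ 2) / Real.sqrt (H m - H u))
      (𝓝[>] z₁) atTop := by
  set h := fun u => hfun a₁ a₂ b₁ b₂ c₁ c₂ γ u τ
  set w : ℝ → ℝ := fun u => δ + γ * τ / u ^ 2
  have hwδ : ∀ u, δ ≤ w u := fun u => le_add_of_nonneg_right (by positivity)
  have hw : ContinuousOn w (Ioi 0) := by
    fun_prop (disch := exact fun u (hu : 0 < u) => pow_ne_zero 2 hu.ne')
  have hHF : ∀ u ∈ Ioo z₁ z₃, HasDerivAt H (h u * w u) u := fun u hu => by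
    rw [show H = _ from funext hH]
    exact hasDerivAt_integral_of_continuousOn isOpen_Ioi
      ((continuousOn_hfun a₁ a₂ b₁ b₂ c₁ c₂ γ τ).mul hw)
      (ordConnected_Ioi.uIcc_subset (hz₁.trans hz₁₂) (hz₁.trans hu.1))
  have hhz₁ : h z₁ = 0 := hder.continuousAt.eq_zero_of_sign_change
    (by filter_upwards [Ioo_mem_nhdsLT hz₁] with u hu using (hpos u (.inl hu)).le)
    (by filter_upwards [Ioo_mem_nhdsGT hz₁₂] with u hu using (hneg u (.inl hu)).le)
  have hF₁ : (fun u => h u * w u) =O[𝓝[>] z₁] (· - z₁) := by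
    have hwz₁ : DifferentiableAt ℝ w z₁ := by fun_prop (disch := positivity)
    simpa [hhz₁] using (hder.differentiableAt.mul hwz₁).isBigO_sub.mono nhdsWithin_le_nhds
  exact tendsto_integral_div_sqrt_sub_atTop hz₁₂ hHF
    (fun u hu => mul_neg_of_neg_of_pos (hneg u (.inl hu)) (hδ.trans_le (hwδ u)))
    (fun u hu => mul_pos (hpos u (.inr hu)) (hδ.trans_le (hwδ u))) hF₁
    (hw.mono fun u hu => hz₁.trans hu.1) hδ (fun u _ => hwδ u) hM

/-- Blow-up of the time map as the shooting level approaches the smallest zero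
`z₁` of `h(·,τ)` (proof of Proposition 6.2, case `H(z₁) ≤ H(z₃)`). -/
theorem stmt_12 (a₁ a₂ b₁ b₂ c₁ c₂ γ δ : ℝ)
    (ha₁ : 0 < a₁) (ha₂ : 0 < a₂) (hb₁ : 0 < b₁) (hb₂ : 0 < b₂)
    (hc₁ : 0 < c₁) (hc₂ : 0 < c₂) (hγ : 0 < γ) (hδ : 0 < δ)
    (τ : ℝ) (hτ : 0 < τ)
    (z₁ z₂ z₃ : ℝ) (hz₁ : 0 < z₁) (hz₁₂ : z₁ < z₂) (hz₂₃ : z₂ < z₃)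
    (hpos : ∀ u : ℝ, u ∈ Ioo 0 z₁ ∪ Ioo z₂ z₃ →
      0 < hfun a₁ a₂ b₁ b₂ c₁ c₂ γ u τ)
    (hneg : ∀ u : ℝ, u ∈ Ioo z₁ z₂ ∪ Ioi z₃ →
      hfun a₁ a₂ b₁ b₂ c₁ c₂ γ u τ < 0)
    (H : ℝ → ℝ)
    (hH : ∀ u : ℝ, H u = ∫ s in z₂..u,
      hfun a₁ a₂ b₁ b₂ c₁ c₂ γ s τ * (δ + γ * τ / s ^ 2))
    (hH13 : H z₁ ≤ H z₃)
    (hu1 : ℝ) (hder : HasDerivAt (fun u => hfun a₁ a₂ b₁ b₂ c₁ c₂ γ u τ) hu1 z₁)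
    (hu1neg : hu1 < 0)
    (M : ℝ → ℝ)
    (hM : ∀ m ∈ Ioo z₁ z₂, M m ∈ Ioo z₂ z₃ ∧ H (M m) = H m) :
    Tendsto (fun m => ∫ u in m..M m,
        (δ + γ * τ / u ^ 2) / Real.sqrt (H m - H u))
      (𝓝[>] z₁) atTop :=
  stmt_12_general a₁ a₂ b₁ b₂ c₁ c₂ γ δ hγ hδ τ hτ z₁ z₂ z₃ hz₁ hz₁₂ hpos hneg H hH hu1 hder M hM
end

section
/- Assume B < A < C (strong competition). Then there exists τ̂ > 0 such that for every τ ∈ (0, τ̂) and every triple 0 < z₁ < z₂ < z₃ with h(u, τ) > 0 for u ∈ (0, z₁) ∪ (z₂, z₃) and h(u, τ) < 0 for u ∈ (z₁, z₂) ∪ (z₃, ∞), one has z₁·(a₁ − b₁·z₁) − c₁τ < 0, z₂·(a₁ − b₁·z₂) − c₁τ > 0, and z₃·(a₁ − b₁·z₃) − c₁τ < 0. -/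
/-!
Write `g(z) = z(a₁ - b₁z) - c₁τ`, so that `g(u) = h(u,τ) + (γτ/u)(a₂ - b₂u - c₂τ/u)`.
For small `τ` the zeros of `h(·,τ)` are trapped between test points: if `κ > c₂/a₂` then
`h(κτ,τ) → -γ(κa₂ - c₂)/κ² < 0` as `τ → 0⁺`, while `h(p,τ) → p(a₁ - b₁p) > 0` for a fixed
`p < a₁/b₁`. With `c₂/a₂ < κ < c₁/a₁`, `a₂/b₂ < p < a₁/b₁` and `K` large, the sign pattern of
`h(·,τ)` forces `z₁ ≤ κτ` and `Kτ ≤ z₂ ≤ p ≤ z₃`, which gives the signs of `g` at `z₁` and `z₂`.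
At `z₃`, `h(z₃,τ) ≤ 0` by continuity and `a₂ - b₂z₃ < 0` because `z₃ > a₂/b₂`, so `g(z₃) < 0`.
-/

open Set

open Filter Topology

structure SignPattern (φ : ℝ → ℝ) (z₁ z₂ z₃ : ℝ) : Prop where
  pos : ∀ u : ℝ, u ∈ Ioo 0 z₁ ∪ Ioo z₂ z₃ → 0 < φ u
  neg : ∀ u : ℝ, u ∈ Ioo z₁ z₂ ∪ Ioi z₃ → φ u < 0

namespace SignPattern

variable {φ : ℝ → ℝ} {z₁ z₂ z₃ q : ℝ}

theorem first_le (hS : SignPattern φ z₁ z₂ z₃) (hq : 0 < q) (hφ : φ q < 0) : z₁ ≤ q := by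
  by_contra! h
  exact (hS.pos q (Or.inl ⟨hq, h⟩)).not_gt hφ

theorem second_le (hS : SignPattern φ z₁ z₂ z₃) (hq : z₁ < q) (hφ : 0 < φ q) : z₂ ≤ q := by
  by_contra! h
  exact (hS.neg q (Or.inl ⟨hq, h⟩)).not_gt hφ

theorem le_second (hS : SignPattern φ z₁ z₂ z₃) (hq : q < z₃) (hφ : φ q < 0) : q ≤ z₂ := by
  by_contra! h
  exact (hS.pos q (Or.inr ⟨h, hq⟩)).not_gt hφ

theorem le_third (hS : SignPattern φ z₁ z₂ z₃) (hφ : 0 < φ q) : q ≤ z₃ := by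
  by_contra! h
  exact (hS.neg q (Or.inr h)).not_gt hφ

theorem third_nonpos (hS : SignPattern φ z₁ z₂ z₃) (hφ : ContinuousAt φ z₃) : φ z₃ ≤ 0 :=
  le_of_tendsto (hφ.mono_left nhdsWithin_le_nhds)
    (eventually_nhdsWithin_of_forall fun u hu => (hS.neg u (Or.inr hu)).le)

end SignPattern

theorem exists_lt_mul_and_mul_lt {x₁ x₂ y₁ y₂ : ℝ} (hx₁ : 0 < x₁) (hx₂ : 0 < x₂)
    (h : x₁ * y₂ < y₁ * x₂) : ∃ t, y₂ < x₂ * t ∧ x₁ * t < y₁ := by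
  have hlt : y₂ / x₂ < y₁ / x₁ := (div_lt_div_iff₀ hx₂ hx₁).2 (by linarith)
  obtain ⟨t, h₂, h₁⟩ := exists_between hlt
  exact ⟨t, (div_lt_iff₀' hx₂).1 h₂, (lt_div_iff₀' hx₁).1 h₁⟩

section

variable {a₁ a₂ b₁ b₂ c₁ c₂ γ : ℝ}

theorem sub_eq_hfun_add (u τ : ℝ) :
    u * (a₁ - b₁ * u) - c₁ * τ =
      hfun a₁ a₂ b₁ b₂ c₁ c₂ γ u τ + γ * τ / u * (a₂ - b₂ * u - c₂ * τ / u) := by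
  unfold hfun
  ring

theorem continuousAt_hfun {u : ℝ} (hu : u ≠ 0) (τ : ℝ) :
    ContinuousAt (fun u => hfun a₁ a₂ b₁ b₂ c₁ c₂ γ u τ) u := by
  unfold hfun
  fun_prop (disch := exact hu)

theorem hfun_mul_eq_of_ne_zero (κ : ℝ) {τ : ℝ} (hτ : τ ≠ 0) :
    hfun a₁ a₂ b₁ b₂ c₁ c₂ γ (κ * τ) τ =
      κ * τ * (a₁ - b₁ * (κ * τ)) - c₁ * τ - γ / κ * (a₂ - b₂ * (κ * τ) - c₂ / κ) := by
  simp only [hfun, mul_div_mul_right _ _ hτ]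

theorem eventually_hfun_mul_neg {κ : ℝ} (hγ : 0 < γ) (hκ : 0 < κ) (hκa : c₂ < a₂ * κ) :
    ∀ᶠ τ in 𝓝[>] 0, hfun a₁ a₂ b₁ b₂ c₁ c₂ γ (κ * τ) τ < 0 := by
  have hlim : 0 < a₂ - c₂ / κ := sub_pos.2 ((div_lt_iff₀ hκ).2 (by linarith))
  have hQ : ∀ᶠ τ in 𝓝 0,
      κ * τ * (a₁ - b₁ * (κ * τ)) - c₁ * τ - γ / κ * (a₂ - b₂ * (κ * τ) - c₂ / κ) < 0 := by
    refine ContinuousAt.eventually_lt (by fun_prop) continuousAt_const ?_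
    simpa using mul_pos (div_pos hγ hκ) hlim
  filter_upwards [nhdsWithin_le_nhds hQ, self_mem_nhdsWithin] with τ hτ hτ₀
  rwa [hfun_mul_eq_of_ne_zero κ (ne_of_gt hτ₀)]

theorem eventually_pos_hfun {p : ℝ} (hp : 0 < p) (hpa : b₁ * p < a₁) :
    ∀ᶠ τ in 𝓝 0, 0 < hfun a₁ a₂ b₁ b₂ c₁ c₂ γ p τ := by
  refine ContinuousAt.eventually_lt continuousAt_const (by unfold hfun; fun_prop) ?_
  simpa [hfun] using mul_pos hp (sub_pos.2 hpa)

theorem sub_neg_of_hfun_nonpos {z τ : ℝ} (hz : 0 < z) (hτ : 0 < τ) (hγ : 0 < γ)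
    (hc₂ : 0 ≤ c₂) (hza : a₂ < b₂ * z) (hh : hfun a₁ a₂ b₁ b₂ c₁ c₂ γ z τ ≤ 0) :
    z * (a₁ - b₁ * z) - c₁ * τ < 0 := by
  have hbracket : a₂ - b₂ * z - c₂ * τ / z < 0 := by
    have : 0 ≤ c₂ * τ / z := by positivity
    linarith
  rw [sub_eq_hfun_add (a₂ := a₂) (b₂ := b₂) (c₂ := c₂) (γ := γ)]
  linarith [mul_neg_of_pos_of_neg (by positivity : 0 < γ * τ / z) hbracket]

end

theorem sub_neg_of_le_mul {a₁ b₁ c₁ κ τ z : ℝ} (hb₁ : 0 ≤ b₁) (ha₁ : 0 ≤ a₁) (hτ : 0 < τ)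
    (hκ : a₁ * κ < c₁) (hzκ : z ≤ κ * τ) : z * (a₁ - b₁ * z) - c₁ * τ < 0 := by
  nlinarith [mul_le_mul_of_nonneg_right hzκ ha₁, mul_nonneg hb₁ (mul_self_nonneg z)]

theorem sub_pos_of_mul_le {a₁ b₁ c₁ K p τ z : ℝ} (hz : 0 ≤ z) (hb₁ : 0 ≤ b₁)
    (hτ : 0 < τ) (hp : 0 ≤ a₁ - b₁ * p) (hK : c₁ < K * (a₁ - b₁ * p))
    (hKz : K * τ ≤ z) (hzp : z ≤ p) : 0 < z * (a₁ - b₁ * z) - c₁ * τ := by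
  rw [sub_pos]
  calc c₁ * τ < K * τ * (a₁ - b₁ * p) := by nlinarith
    _ ≤ z * (a₁ - b₁ * p) := mul_le_mul_of_nonneg_right hKz hp
    _ ≤ z * (a₁ - b₁ * z) := mul_le_mul_of_nonneg_left (by nlinarith) hz

theorem signs_at_zeros {a₁ a₂ b₁ b₂ c₁ c₂ γ κ K p τ z₁ z₂ z₃ : ℝ} (ha₁ : 0 ≤ a₁) (hb₁ : 0 ≤ b₁)
    (hb₂ : 0 ≤ b₂) (hc₂ : 0 ≤ c₂) (hγ : 0 < γ) (hτ : 0 < τ) (hκ : 0 < κ)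
    (hκ₁ : a₁ * κ < c₁) (hp₂ : a₂ < b₂ * p) (hM : 0 ≤ a₁ - b₁ * p)
    (hK₁ : c₁ < K * (a₁ - b₁ * p)) (hz₁ : 0 < z₁) (h₁₂ : z₁ < z₂) (h₂₃ : z₂ < z₃)
    (hS : SignPattern (fun u => hfun a₁ a₂ b₁ b₂ c₁ c₂ γ u τ) z₁ z₂ z₃)
    (hκτ : hfun a₁ a₂ b₁ b₂ c₁ c₂ γ (κ * τ) τ < 0) (hKτ : hfun a₁ a₂ b₁ b₂ c₁ c₂ γ (K * τ) τ < 0)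
    (hpτ : 0 < hfun a₁ a₂ b₁ b₂ c₁ c₂ γ p τ) (hκp : κ * τ < p) (hKp : K * τ < p) :
    z₁ * (a₁ - b₁ * z₁) - c₁ * τ < 0 ∧
      0 < z₂ * (a₁ - b₁ * z₂) - c₁ * τ ∧
      z₃ * (a₁ - b₁ * z₃) - c₁ * τ < 0 := by
  have hz₁κ : z₁ ≤ κ * τ := hS.first_le (mul_pos hκ hτ) hκτ
  have hz₂p : z₂ ≤ p := hS.second_le (hz₁κ.trans_lt hκp) hpτ
  have hpz₃ : p ≤ z₃ := hS.le_third hpτ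
  have hKz₂ : K * τ ≤ z₂ := hS.le_second (hKp.trans_le hpz₃) hKτ
  have hh₃ := hS.third_nonpos (continuousAt_hfun (by linarith) τ)
  exact ⟨sub_neg_of_le_mul hb₁ ha₁ hτ hκ₁ hz₁κ,
    sub_pos_of_mul_le (by linarith) hb₁ hτ hM hK₁ hKz₂ hz₂p,
    sub_neg_of_hfun_nonpos (by linarith) hτ hγ hc₂ (by nlinarith) hh₃⟩

theorem stmt_13_general (a₁ a₂ b₁ b₂ c₁ c₂ γ : ℝ)
    (ha₁ : 0 < a₁) (ha₂ : 0 < a₂) (hb₁ : 0 < b₁) (hb₂ : 0 < b₂)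
    (hc₂ : 0 < c₂) (hγ : 0 < γ)
    (hBA : b₁ / b₂ < a₁ / a₂) (hAC : a₁ / a₂ < c₁ / c₂) :
    ∃ τhat > 0, ∀ τ : ℝ, τ ∈ Ioo 0 τhat →
      ∀ z₁ z₂ z₃ : ℝ, 0 < z₁ → z₁ < z₂ → z₂ < z₃ →
      (∀ u : ℝ, u ∈ Ioo 0 z₁ ∪ Ioo z₂ z₃ →
        0 < hfun a₁ a₂ b₁ b₂ c₁ c₂ γ u τ) →
      (∀ u : ℝ, u ∈ Ioo z₁ z₂ ∪ Ioi z₃ →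
        hfun a₁ a₂ b₁ b₂ c₁ c₂ γ u τ < 0) →
      z₁ * (a₁ - b₁ * z₁) - c₁ * τ < 0 ∧
      0 < z₂ * (a₁ - b₁ * z₂) - c₁ * τ ∧
      z₃ * (a₁ - b₁ * z₃) - c₁ * τ < 0 := by
  obtain ⟨κ, hκ₂, hκ₁⟩ := exists_lt_mul_and_mul_lt ha₁ ha₂ ((div_lt_div_iff₀ ha₂ hc₂).1 hAC)
  obtain ⟨p, hp₂, hp₁⟩ := exists_lt_mul_and_mul_lt hb₁ hb₂ ((div_lt_div_iff₀ hb₂ ha₂).1 hBA)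
  have hM : 0 < a₁ - b₁ * p := by linarith
  obtain ⟨K, hK₂, hK₁⟩ : ∃ K, c₂ < a₂ * K ∧ c₁ < K * (a₁ - b₁ * p) :=
    ((tendsto_id.const_mul_atTop ha₂).eventually_gt_atTop c₂).and
      ((tendsto_id.atTop_mul_const hM).eventually_gt_atTop c₁) |>.exists
  have hκ : 0 < κ := pos_of_mul_pos_right (hc₂.trans hκ₂) ha₂.le
  have hK : 0 < K := pos_of_mul_pos_right (hc₂.trans hK₂) ha₂.le
  have hp : 0 < p := pos_of_mul_pos_right (ha₂.trans hp₂) hb₂.le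
  have hsmall : ∀ᶠ τ in 𝓝[>] 0, hfun a₁ a₂ b₁ b₂ c₁ c₂ γ (κ * τ) τ < 0 ∧
      hfun a₁ a₂ b₁ b₂ c₁ c₂ γ (K * τ) τ < 0 ∧ 0 < hfun a₁ a₂ b₁ b₂ c₁ c₂ γ p τ ∧
      κ * τ < p ∧ K * τ < p := by
    have hlin (t : ℝ) : ∀ᶠ τ in 𝓝[>] (0 : ℝ), t * τ < p := nhdsWithin_le_nhds <|
      ((continuous_const_mul t).tendsto' 0 0 (mul_zero t)).eventually_lt_const hp
    filter_upwards [eventually_hfun_mul_neg hγ hκ hκ₂, eventually_hfun_mul_neg hγ hK hK₂,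
      nhdsWithin_le_nhds (eventually_pos_hfun hp hp₁), hlin κ, hlin K] with τ h₁ h₂ h₃ h₄ h₅
    exact ⟨h₁, h₂, h₃, h₄, h₅⟩
  obtain ⟨τhat, hτhat, hτhat_small⟩ := (nhdsGT_basis (0 : ℝ)).eventually_iff.1 hsmall
  refine ⟨τhat, hτhat, fun τ hτ z₁ z₂ z₃ hz₁ h₁₂ h₂₃ hpos hneg => ?_⟩
  obtain ⟨hκτ, hKτ, hpτ, hκp, hKp⟩ := hτhat_small hτ
  exact signs_at_zeros ha₁.le hb₁.le hb₂.le hc₂.le hγ hτ.1 hκ hκ₁ hp₂ hM.le hK₁ hz₁ h₁₂ h₂₃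
    ⟨hpos, hneg⟩ hκτ hKτ hpτ hκp hKp

/-- Lemma 6.6(i): in the strong competition case `B < A < C`, for all small `τ > 0`
the values of `f(z, τ/z) = z(a₁ − b₁z) − c₁τ` at the three zeros `z₁ < z₂ < z₃`
of `h(·,τ)` are negative, positive, negative respectively. -/
theorem stmt_13 (a₁ a₂ b₁ b₂ c₁ c₂ γ δ : ℝ)
    (ha₁ : 0 < a₁) (ha₂ : 0 < a₂) (hb₁ : 0 < b₁) (hb₂ : 0 < b₂)
    (hc₁ : 0 < c₁) (hc₂ : 0 < c₂) (hγ : 0 < γ) (hδ : 0 < δ)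
    (hBA : b₁ / b₂ < a₁ / a₂) (hAC : a₁ / a₂ < c₁ / c₂) :
    ∃ τhat > 0, ∀ τ : ℝ, τ ∈ Ioo 0 τhat →
      ∀ z₁ z₂ z₃ : ℝ, 0 < z₁ → z₁ < z₂ → z₂ < z₃ →
      (∀ u : ℝ, u ∈ Ioo 0 z₁ ∪ Ioo z₂ z₃ →
        0 < hfun a₁ a₂ b₁ b₂ c₁ c₂ γ u τ) →
      (∀ u : ℝ, u ∈ Ioo z₁ z₂ ∪ Ioi z₃ →
        hfun a₁ a₂ b₁ b₂ c₁ c₂ γ u τ < 0) →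
      z₁ * (a₁ - b₁ * z₁) - c₁ * τ < 0 ∧
      0 < z₂ * (a₁ - b₁ * z₂) - c₁ * τ ∧
      z₃ * (a₁ - b₁ * z₃) - c₁ * τ < 0 :=
  stmt_13_general a₁ a₂ b₁ b₂ c₁ c₂ γ ha₁ ha₂ hb₁ hb₂ hc₂ hγ hBA hAC
end

section
/- For τ > 0 with 4b₁c₁τ < a₁² and 4b₂c₂τ < a₂², define Z₁(f,τ) := (a₁ − √(a₁² − 4b₁c₁τ))/(2b₁), Z₂(f,τ) := (a₁ + √(a₁² − 4b₁c₁τ))/(2b₁), Z₁(g,τ) := (a₂ − √(a₂² − 4b₂c₂τ))/(2b₂), Z₂(g,τ) := (a₂ + √(a₂² − 4b₂c₂τ))/(2b₂). There exists τ̂ > 0 such that for every τ ∈ (0, τ̂): if B < A < C then Z₁(g,τ) < Z₁(f,τ) < Z₂(g,τ) < Z₂(f,τ); and if C < A < B then Z₁(f,τ) < Z₁(g,τ) < Z₂(f,τ) < Z₂(g,τ). -/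
/-
As `τ → 0⁺` the large root of `u (a - b u) = c τ` tends to `a / b`, while the small root
vanishes like `(c / a) τ`, since `(a - √(a² - 4bcτ)) / (2b) = τ · 2c / (a + √(a² - 4bcτ))`.
Hence for small `τ` the small roots are ordered as `c₁ / a₁` and `c₂ / a₂`, the large roots as
`a₁ / b₁` and `a₂ / b₂`, and every small root lies below every large root. The conditions
`B < A < C` and `C < A < B` are exactly these two comparisons, in the two directions.
-/

open Set Filter Topology

noncomputable section

-- The two roots of `u (a - b u) = c τ`, in increasing order when `b > 0`.
def smallRoot (a b c τ : ℝ) : ℝ := (a - √(a ^ 2 - 4 * b * c * τ)) / (2 * b)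

def largeRoot (a b c τ : ℝ) : ℝ := (a + √(a ^ 2 - 4 * b * c * τ)) / (2 * b)

def smallRootSlope (a b c τ : ℝ) : ℝ := 2 * c / (a + √(a ^ 2 - 4 * b * c * τ))

theorem tendsto_largeRoot {a b : ℝ} (ha : 0 ≤ a) (hb : b ≠ 0) (c : ℝ) :
    Tendsto (largeRoot a b c) (𝓝 0) (𝓝 (a / b)) := by
  refine (by unfold largeRoot; fun_prop : Continuous (largeRoot a b c)).tendsto' 0 _ ?_
  simp only [largeRoot, mul_zero, sub_zero, Real.sqrt_sq ha]
  field_simp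
  ring

theorem tendsto_smallRoot {a : ℝ} (ha : 0 ≤ a) (b c : ℝ) :
    Tendsto (smallRoot a b c) (𝓝 0) (𝓝 0) := by
  refine (by unfold smallRoot; fun_prop : Continuous (smallRoot a b c)).tendsto' 0 _ ?_
  simp only [smallRoot, mul_zero, sub_zero, Real.sqrt_sq ha, sub_self, zero_div]

theorem tendsto_smallRootSlope {a : ℝ} (ha : 0 < a) (b c : ℝ) :
    Tendsto (smallRootSlope a b c) (𝓝 0) (𝓝 (c / a)) := by
  have hsqrt : √(a ^ 2 - 4 * b * c * 0) = a := by simp [Real.sqrt_sq ha.le]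
  have hcont : ContinuousAt (smallRootSlope a b c) 0 := by
    unfold smallRootSlope
    exact ContinuousAt.div (by fun_prop) (by fun_prop) (by rw [hsqrt]; positivity)
  convert hcont.tendsto using 2
  rw [smallRootSlope, hsqrt]
  field_simp
  ring

theorem smallRoot_eq_mul_smallRootSlope {a b c : ℝ} (ha : 0 < a) (hb : b ≠ 0) {τ : ℝ}
    (hτ : 4 * b * c * τ ≤ a ^ 2) :
    smallRoot a b c τ = τ * smallRootSlope a b c τ := by
  have hs : √(a ^ 2 - 4 * b * c * τ) ^ 2 = a ^ 2 - 4 * b * c * τ := Real.sq_sqrt (by linarith)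
  have hpos : 0 < a + √(a ^ 2 - 4 * b * c * τ) := by positivity
  unfold smallRoot smallRootSlope
  field_simp
  linear_combination -hs

theorem eventually_discr_nonneg {a : ℝ} (ha : a ≠ 0) (b c : ℝ) :
    ∀ᶠ τ in 𝓝 (0 : ℝ), 4 * b * c * τ ≤ a ^ 2 := by
  have h : Tendsto (fun τ : ℝ => 4 * b * c * τ) (𝓝 0) (𝓝 0) :=
    (by fun_prop : Continuous fun τ : ℝ => 4 * b * c * τ).tendsto' 0 0 (mul_zero _)
  exact h.eventually (eventually_le_nhds (by positivity))

theorem eventually_smallRoot_lt {a₁ b₁ c₁ a₂ b₂ c₂ : ℝ} (ha₁ : 0 < a₁) (ha₂ : 0 < a₂)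
    (hb₁ : b₁ ≠ 0) (hb₂ : b₂ ≠ 0) (hslope : c₂ / a₂ < c₁ / a₁) :
    ∀ᶠ τ in 𝓝[>] 0, smallRoot a₂ b₂ c₂ τ < smallRoot a₁ b₁ c₁ τ := by
  have hlt : ∀ᶠ τ in 𝓝 0, smallRootSlope a₂ b₂ c₂ τ < smallRootSlope a₁ b₁ c₁ τ :=
    (tendsto_smallRootSlope ha₂ b₂ c₂).eventually_lt (tendsto_smallRootSlope ha₁ b₁ c₁) hslope
  filter_upwards [self_mem_nhdsWithin, nhdsWithin_le_nhds hlt,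
    nhdsWithin_le_nhds (eventually_discr_nonneg ha₁.ne' b₁ c₁),
    nhdsWithin_le_nhds (eventually_discr_nonneg ha₂.ne' b₂ c₂)] with τ hτ hlt h₁ h₂
  rw [smallRoot_eq_mul_smallRootSlope ha₁ hb₁ h₁, smallRoot_eq_mul_smallRootSlope ha₂ hb₂ h₂]
  exact mul_lt_mul_of_pos_left hlt hτ

theorem eventually_roots_interlace {a₁ b₁ c₁ a₂ b₂ c₂ : ℝ} (ha₁ : 0 < a₁) (ha₂ : 0 < a₂)
    (hb₁ : 0 < b₁) (hb₂ : 0 < b₂) (hlarge : a₂ / b₂ < a₁ / b₁) (hslope : c₂ / a₂ < c₁ / a₁) :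
    ∀ᶠ τ in 𝓝[>] 0, smallRoot a₂ b₂ c₂ τ < smallRoot a₁ b₁ c₁ τ ∧
      smallRoot a₁ b₁ c₁ τ < largeRoot a₂ b₂ c₂ τ ∧
      largeRoot a₂ b₂ c₂ τ < largeRoot a₁ b₁ c₁ τ := by
  have hlarge₂ := tendsto_largeRoot ha₂.le hb₂.ne' c₂
  refine (eventually_smallRoot_lt ha₁ ha₂ hb₁.ne' hb₂.ne' hslope).and
    (nhdsWithin_le_nhds ((tendsto_smallRoot ha₁.le b₁ c₁).eventually_lt hlarge₂ ?_ |>.and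
      (hlarge₂.eventually_lt (tendsto_largeRoot ha₁.le hb₁.ne' c₁) hlarge)))
  positivity

theorem stmt_15_general (a₁ a₂ b₁ b₂ c₁ c₂ : ℝ)
    (ha₁ : 0 < a₁) (ha₂ : 0 < a₂) (hb₁ : 0 < b₁) (hb₂ : 0 < b₂)
    (hc₂ : 0 < c₂) :
    ∃ τhat > 0, ∀ τ : ℝ, τ ∈ Ioo 0 τhat →
      4 * b₁ * c₁ * τ < a₁ ^ 2 → 4 * b₂ * c₂ * τ < a₂ ^ 2 →
      ((b₁ / b₂ < a₁ / a₂ ∧ a₁ / a₂ < c₁ / c₂ →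
        (a₂ - Real.sqrt (a₂ ^ 2 - 4 * b₂ * c₂ * τ)) / (2 * b₂) <
          (a₁ - Real.sqrt (a₁ ^ 2 - 4 * b₁ * c₁ * τ)) / (2 * b₁) ∧
        (a₁ - Real.sqrt (a₁ ^ 2 - 4 * b₁ * c₁ * τ)) / (2 * b₁) <
          (a₂ + Real.sqrt (a₂ ^ 2 - 4 * b₂ * c₂ * τ)) / (2 * b₂) ∧
        (a₂ + Real.sqrt (a₂ ^ 2 - 4 * b₂ * c₂ * τ)) / (2 * b₂) <
          (a₁ + Real.sqrt (a₁ ^ 2 - 4 * b₁ * c₁ * τ)) / (2 * b₁)) ∧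
      (c₁ / c₂ < a₁ / a₂ ∧ a₁ / a₂ < b₁ / b₂ →
        (a₁ - Real.sqrt (a₁ ^ 2 - 4 * b₁ * c₁ * τ)) / (2 * b₁) <
          (a₂ - Real.sqrt (a₂ ^ 2 - 4 * b₂ * c₂ * τ)) / (2 * b₂) ∧
        (a₂ - Real.sqrt (a₂ ^ 2 - 4 * b₂ * c₂ * τ)) / (2 * b₂) <
          (a₁ + Real.sqrt (a₁ ^ 2 - 4 * b₁ * c₁ * τ)) / (2 * b₁) ∧
        (a₁ + Real.sqrt (a₁ ^ 2 - 4 * b₁ * c₁ * τ)) / (2 * b₁) <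
          (a₂ + Real.sqrt (a₂ ^ 2 - 4 * b₂ * c₂ * τ)) / (2 * b₂))) := by
  have hBAC : b₁ / b₂ < a₁ / a₂ ∧ a₁ / a₂ < c₁ / c₂ → ∀ᶠ τ in 𝓝[>] 0,
      smallRoot a₂ b₂ c₂ τ < smallRoot a₁ b₁ c₁ τ ∧ smallRoot a₁ b₁ c₁ τ < largeRoot a₂ b₂ c₂ τ ∧
        largeRoot a₂ b₂ c₂ τ < largeRoot a₁ b₁ c₁ τ := by
    rintro ⟨hB, hC⟩
    rw [div_lt_div_iff₀ hb₂ ha₂] at hB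
    rw [div_lt_div_iff₀ ha₂ hc₂] at hC
    refine eventually_roots_interlace ha₁ ha₂ hb₁ hb₂ ?_ ?_
    · rw [div_lt_div_iff₀ hb₂ hb₁]; linarith
    · rw [div_lt_div_iff₀ ha₂ ha₁]; linarith
  have hCAB : c₁ / c₂ < a₁ / a₂ ∧ a₁ / a₂ < b₁ / b₂ → ∀ᶠ τ in 𝓝[>] 0,
      smallRoot a₁ b₁ c₁ τ < smallRoot a₂ b₂ c₂ τ ∧ smallRoot a₂ b₂ c₂ τ < largeRoot a₁ b₁ c₁ τ ∧
        largeRoot a₁ b₁ c₁ τ < largeRoot a₂ b₂ c₂ τ := by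
    rintro ⟨hC, hB⟩
    rw [div_lt_div_iff₀ ha₂ hb₂] at hB
    rw [div_lt_div_iff₀ hc₂ ha₂] at hC
    refine eventually_roots_interlace ha₂ ha₁ hb₂ hb₁ ?_ ?_
    · rw [div_lt_div_iff₀ hb₁ hb₂]; linarith
    · rw [div_lt_div_iff₀ ha₁ ha₂]; linarith
  have key := (eventually_imp_distrib_left.2 hBAC).and (eventually_imp_distrib_left.2 hCAB)
  obtain ⟨τhat, hτhat, hsub⟩ := mem_nhdsGT_iff_exists_Ioo_subset.1 key
  exact ⟨τhat, hτhat, fun τ hτ _ _ => hsub hτ⟩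

/-- Ordering of the roots `Z₁(f,τ) ≤ Z₂(f,τ)` of `u(a₁ − b₁u) = c₁τ` and
`Z₁(g,τ) ≤ Z₂(g,τ)` of `u(a₂ − b₂u) = c₂τ` for small `τ` (proof of Lemma 6.6). -/
theorem stmt_15 (a₁ a₂ b₁ b₂ c₁ c₂ : ℝ)
    (ha₁ : 0 < a₁) (ha₂ : 0 < a₂) (hb₁ : 0 < b₁) (hb₂ : 0 < b₂)
    (hc₁ : 0 < c₁) (hc₂ : 0 < c₂) :
    ∃ τhat > 0, ∀ τ : ℝ, τ ∈ Ioo 0 τhat →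
      4 * b₁ * c₁ * τ < a₁ ^ 2 → 4 * b₂ * c₂ * τ < a₂ ^ 2 →
      ((b₁ / b₂ < a₁ / a₂ ∧ a₁ / a₂ < c₁ / c₂ →
        (a₂ - Real.sqrt (a₂ ^ 2 - 4 * b₂ * c₂ * τ)) / (2 * b₂) <
          (a₁ - Real.sqrt (a₁ ^ 2 - 4 * b₁ * c₁ * τ)) / (2 * b₁) ∧
        (a₁ - Real.sqrt (a₁ ^ 2 - 4 * b₁ * c₁ * τ)) / (2 * b₁) <
          (a₂ + Real.sqrt (a₂ ^ 2 - 4 * b₂ * c₂ * τ)) / (2 * b₂) ∧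
        (a₂ + Real.sqrt (a₂ ^ 2 - 4 * b₂ * c₂ * τ)) / (2 * b₂) <
          (a₁ + Real.sqrt (a₁ ^ 2 - 4 * b₁ * c₁ * τ)) / (2 * b₁)) ∧
      (c₁ / c₂ < a₁ / a₂ ∧ a₁ / a₂ < b₁ / b₂ →
        (a₁ - Real.sqrt (a₁ ^ 2 - 4 * b₁ * c₁ * τ)) / (2 * b₁) <
          (a₂ - Real.sqrt (a₂ ^ 2 - 4 * b₂ * c₂ * τ)) / (2 * b₂) ∧
        (a₂ - Real.sqrt (a₂ ^ 2 - 4 * b₂ * c₂ * τ)) / (2 * b₂) <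
          (a₁ + Real.sqrt (a₁ ^ 2 - 4 * b₁ * c₁ * τ)) / (2 * b₁) ∧
        (a₁ + Real.sqrt (a₁ ^ 2 - 4 * b₁ * c₁ * τ)) / (2 * b₁) <
          (a₂ + Real.sqrt (a₂ ^ 2 - 4 * b₂ * c₂ * τ)) / (2 * b₂))) :=
  stmt_15_general a₁ a₂ b₁ b₂ c₁ c₂ ha₁ ha₂ hb₁ hb₂ hc₂

end
end

section
/- Assume C < A < B or B < A < C (so that u* > 0 and v* > 0), and set τ* := u*·v*. Then u* · ∂h/∂u(u*, τ*) = (γb₂ + c₁)·τ* − b₁·(u*)² − γ·c₂·(v*)², and consequently ∂h/∂u(u*, τ*) > 0 if and only if D > 0. -/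
/-!
At the coexistence state `(u*, v*)` the two equilibrium equations `b₁u + c₁v = a₁` and
`b₂u + c₂v = a₂` hold, and `τ*/u* = v*`; substituting them into the explicit derivative
`h_u = a₁ − 2b₁u + γτ(a₂u − 2c₂τ)/u³` gives the formula for `u*·h_u`. Writing `u*` and `v*`
through the ratios `A, B, C` turns that formula into `D` up to the positive factor
`a₂²b₂c₂ / (b₁c₂ − b₂c₁)²`, and `u* > 0` transfers the sign to `h_u`.
-/

section

variable {a₁ a₂ b₁ b₂ c₁ c₂ γ : ℝ}

theorem hasDerivAt_hfun (τ : ℝ) {u : ℝ} (hu : u ≠ 0) :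
    HasDerivAt (fun x => hfun a₁ a₂ b₁ b₂ c₁ c₂ γ x τ)
      (a₁ - 2 * b₁ * u + γ * τ * (a₂ * u - 2 * c₂ * τ) / u ^ 3) u := by
  have hinv : HasDerivAt (fun x : ℝ => x⁻¹) (-(u ^ 2)⁻¹) u := hasDerivAt_inv hu
  have hid : HasDerivAt (fun x : ℝ => x) 1 u := hasDerivAt_id u
  have hderiv : HasDerivAt (fun x => x * (a₁ - b₁ * x) - c₁ * τ -
      γ * τ * x⁻¹ * (a₂ - b₂ * x - c₂ * τ * x⁻¹)) _ u :=
    ((hid.mul ((hasDerivAt_const u a₁).sub (hid.const_mul b₁))).sub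
      (hasDerivAt_const u (c₁ * τ))).sub ((hinv.const_mul (γ * τ)).mul
        (((hasDerivAt_const u a₂).sub (hid.const_mul b₂)).sub (hinv.const_mul (c₂ * τ))))
  convert hderiv using 1
  · ext x
    simp only [hfun, div_eq_mul_inv]
  · simp only [Pi.sub_apply]
    field_simp
    ring

theorem cramer_solution (hdet : b₁ * c₂ - b₂ * c₁ ≠ 0) :
    b₁ * ((a₁ * c₂ - a₂ * c₁) / (b₁ * c₂ - b₂ * c₁)) +
        c₁ * ((b₁ * a₂ - b₂ * a₁) / (b₁ * c₂ - b₂ * c₁)) = a₁ ∧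
      b₂ * ((a₁ * c₂ - a₂ * c₁) / (b₁ * c₂ - b₂ * c₁)) +
        c₂ * ((b₁ * a₂ - b₂ * a₁) / (b₁ * c₂ - b₂ * c₁)) = a₂ := by
  generalize hd : b₁ * c₂ - b₂ * c₁ = d at hdet ⊢
  constructor <;> field_simp <;> subst hd <;> ring

theorem mul_hfun_deriv_of_equilibrium {u v : ℝ} (hu : u ≠ 0)
    (h₁ : b₁ * u + c₁ * v = a₁) (h₂ : b₂ * u + c₂ * v = a₂) :
    u * (a₁ - 2 * b₁ * u + γ * (u * v) * (a₂ * u - 2 * c₂ * (u * v)) / u ^ 3) =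
      (γ * b₂ + c₁) * (u * v) - b₁ * u ^ 2 - γ * c₂ * v ^ 2 := by
  field_simp
  linear_combination -u * h₁ - γ * v * h₂

theorem coexistence_u_pos (ha₂ : 0 < a₂) (hb₂ : 0 < b₂) (hc₂ : 0 < c₂)
    (hcase : (c₁ / c₂ < a₁ / a₂ ∧ a₁ / a₂ < b₁ / b₂) ∨
      (b₁ / b₂ < a₁ / a₂ ∧ a₁ / a₂ < c₁ / c₂)) :
    0 < (a₁ * c₂ - a₂ * c₁) / (b₁ * c₂ - b₂ * c₁) := by
  rcases hcase with ⟨hCA, hAB⟩ | ⟨hBA, hAC⟩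
  · have hnum := (div_lt_div_iff₀ hc₂ ha₂).mp hCA
    have hden := (div_lt_div_iff₀ hc₂ hb₂).mp (hCA.trans hAB)
    exact div_pos (by linarith) (by linarith)
  · have hnum := (div_lt_div_iff₀ ha₂ hc₂).mp hAC
    have hden := (div_lt_div_iff₀ hb₂ hc₂).mp (hBA.trans hAC)
    exact div_pos_of_neg_of_neg (by linarith) (by linarith)

theorem equilibrium_expr_mul_det_sq (ha₂ : a₂ ≠ 0) (hb₂ : b₂ ≠ 0) (hc₂ : c₂ ≠ 0)
    (hdet : b₁ * c₂ - b₂ * c₁ ≠ 0) {u v : ℝ}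
    (hu : u = (a₁ * c₂ - a₂ * c₁) / (b₁ * c₂ - b₂ * c₁))
    (hv : v = (b₁ * a₂ - b₂ * a₁) / (b₁ * c₂ - b₂ * c₁)) :
    ((γ * b₂ + c₁) * (u * v) - b₁ * u ^ 2 - γ * c₂ * v ^ 2) * (b₁ * c₂ - b₂ * c₁) ^ 2 =
      (γ * b₂ * (a₁ / a₂ - b₁ / b₂) * (b₁ / b₂ + c₁ / c₂ - 2 * (a₁ / a₂)) +
          c₂ * (c₁ / c₂ - a₁ / a₂) *
            (a₁ / a₂ * (b₁ / b₂ + c₁ / c₂) - 2 * (b₁ / b₂) * (c₁ / c₂))) *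
        (a₂ ^ 2 * b₂ * c₂) := by
  subst hu hv
  generalize hd : b₁ * c₂ - b₂ * c₁ = d at hdet ⊢
  field_simp
  subst hd
  ring

end

theorem stmt_17_general (a₁ a₂ b₁ b₂ c₁ c₂ γ : ℝ)
    (ha₂ : 0 < a₂) (hb₂ : 0 < b₂) (hc₂ : 0 < c₂)
    (hcase : (c₁ / c₂ < a₁ / a₂ ∧ a₁ / a₂ < b₁ / b₂) ∨
             (b₁ / b₂ < a₁ / a₂ ∧ a₁ / a₂ < c₁ / c₂))
    (ustar vstar τstar hu : ℝ)
    (hustar : ustar = (a₁ * c₂ - a₂ * c₁) / (b₁ * c₂ - b₂ * c₁))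
    (hvstar : vstar = (b₁ * a₂ - b₂ * a₁) / (b₁ * c₂ - b₂ * c₁))
    (hτstar : τstar = ustar * vstar)
    (hder : HasDerivAt (fun u => hfun a₁ a₂ b₁ b₂ c₁ c₂ γ u τstar) hu ustar) :
    ustar * hu =
      (γ * b₂ + c₁) * τstar - b₁ * ustar ^ 2 - γ * c₂ * vstar ^ 2 ∧
    (0 < hu ↔
      0 < γ * b₂ * (a₁ / a₂ - b₁ / b₂) * (b₁ / b₂ + c₁ / c₂ - 2 * (a₁ / a₂)) +
          c₂ * (c₁ / c₂ - a₁ / a₂) *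
            (a₁ / a₂ * (b₁ / b₂ + c₁ / c₂) - 2 * (b₁ / b₂) * (c₁ / c₂))) := by
  have hupos : 0 < ustar := hustar ▸ coexistence_u_pos ha₂ hb₂ hc₂ hcase
  -- a vanishing denominator would make `u*` the junk value `x / 0 = 0`
  have hdet : b₁ * c₂ - b₂ * c₁ ≠ 0 := by
    intro h
    simp [hustar, h] at hupos
  obtain ⟨h₁, h₂⟩ := cramer_solution (a₁ := a₁) (a₂ := a₂) hdet
  have hformula : ustar * hu =
      (γ * b₂ + c₁) * τstar - b₁ * ustar ^ 2 - γ * c₂ * vstar ^ 2 := by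
    rw [hder.unique (hasDerivAt_hfun τstar hupos.ne'), hτstar]
    exact mul_hfun_deriv_of_equilibrium hupos.ne' (hustar ▸ hvstar ▸ h₁) (hustar ▸ hvstar ▸ h₂)
  refine ⟨hformula, ?_⟩
  have hkey := equilibrium_expr_mul_det_sq (γ := γ) ha₂.ne' hb₂.ne' hc₂.ne' hdet hustar hvstar
  rw [← hτstar, ← hformula] at hkey
  rw [← mul_pos_iff_of_pos_left hupos, ← mul_pos_iff_of_pos_right (pow_pos (abs_pos.2 hdet) 2),
    sq_abs, hkey, mul_pos_iff_of_pos_right (by positivity)]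

/-- Computation used in Lemma 6.8: with `τ* = u*v*`, one has
`u*·h_u(u*, τ*) = (γb₂ + c₁)τ* − b₁(u*)² − γc₂(v*)²`, and consequently
`h_u(u*, τ*) > 0` if and only if `D > 0`. -/
theorem stmt_17 (a₁ a₂ b₁ b₂ c₁ c₂ γ δ : ℝ)
    (ha₁ : 0 < a₁) (ha₂ : 0 < a₂) (hb₁ : 0 < b₁) (hb₂ : 0 < b₂)
    (hc₁ : 0 < c₁) (hc₂ : 0 < c₂) (hγ : 0 < γ) (hδ : 0 < δ)
    (hcase : (c₁ / c₂ < a₁ / a₂ ∧ a₁ / a₂ < b₁ / b₂) ∨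
             (b₁ / b₂ < a₁ / a₂ ∧ a₁ / a₂ < c₁ / c₂))
    (ustar vstar τstar hu : ℝ)
    (hustar : ustar = (a₁ * c₂ - a₂ * c₁) / (b₁ * c₂ - b₂ * c₁))
    (hvstar : vstar = (b₁ * a₂ - b₂ * a₁) / (b₁ * c₂ - b₂ * c₁))
    (hτstar : τstar = ustar * vstar)
    (hder : HasDerivAt (fun u => hfun a₁ a₂ b₁ b₂ c₁ c₂ γ u τstar) hu ustar) :
    ustar * hu =
      (γ * b₂ + c₁) * τstar - b₁ * ustar ^ 2 - γ * c₂ * vstar ^ 2 ∧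
    (0 < hu ↔
      0 < γ * b₂ * (a₁ / a₂ - b₁ / b₂) * (b₁ / b₂ + c₁ / c₂ - 2 * (a₁ / a₂)) +
          c₂ * (c₁ / c₂ - a₁ / a₂) *
            (a₁ / a₂ * (b₁ / b₂ + c₁ / c₂) - 2 * (b₁ / b₂) * (c₁ / c₂))) :=
  stmt_17_general a₁ a₂ b₁ b₂ c₁ c₂ γ ha₂ hb₂ hc₂ hcase ustar vstar τstar hu hustar hvstar hτstar
    hder
end

section
/- Assume C < A < B or B < A < C, and assume D > 0. Set τ* := u*·v*. Then h(u*, τ*) = 0, and there exist real numbers z₁, z₃ with 0 < z₁ < u* < z₃ such that h(u, τ*) > 0 for all u ∈ (0, z₁) ∪ (u*, z₃) and h(u, τ*) < 0 for all u ∈ (z₁, u*) ∪ (z₃, ∞); that is, h(·, τ*) has exactly three positive zeros and u* is the middle one. -/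
/-!
With `a₁ = b₁u* + c₁v*` and `a₂ = b₂u* + c₂v*` one has `h(w, u*v*) · w² = (w − u*) · Q(w)` for a
cubic `Q` with leading coefficient `−b₁`, `Q(0) < 0` and `Q(u*) > 0`; the last inequality is
`D > 0` in disguise. The intermediate value theorem gives zeros `z₁ ∈ (0, u*)` and `z₃ > u*` of
`Q`, its third zero is negative because `Q(0) < 0`, and so on `(0, ∞)` the sign of `h(·, u*v*)`
is that of `−(w − z₁)(w − u*)(w − z₃)`.
-/

open Set

def hCubic (b₁ b₂ c₁ c₂ γ u v w : ℝ) : ℝ :=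
  -b₁ * w ^ 3 + c₁ * v * w ^ 2 + γ * b₂ * u * v * w - γ * c₂ * u * v ^ 2

lemma cubic_eq_mul_of_roots {α β c d x y : ℝ} (hxy : x ≠ y)
    (hx : α * x ^ 3 + β * x ^ 2 + c * x + d = 0) (hy : α * y ^ 3 + β * y ^ 2 + c * y + d = 0)
    (w : ℝ) :
    α * w ^ 3 + β * w ^ 2 + c * w + d = (w - x) * (w - y) * (α * w + β + α * (x + y)) := by
  have hslope : c - α * x * y + (β + α * (x + y)) * (x + y) = 0 := by
    have h : (x - y) * (c - α * x * y + (β + α * (x + y)) * (x + y)) = 0 := by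
      linear_combination hx - hy
    exact (mul_eq_zero.mp h).resolve_left (sub_ne_zero.mpr hxy)
  linear_combination hx + (w - x) * hslope

lemma exists_gt_cubic_neg {α : ℝ} (hα : α < 0) (β c d w₀ : ℝ) :
    ∃ w > w₀, α * w ^ 3 + β * w ^ 2 + c * w + d < 0 := by
  set S := |β| + |c| + |d|
  obtain ⟨t, ht, hαt⟩ : ∃ t, 0 ≤ t ∧ α * t = -S :=
    ⟨S / -α, div_nonneg (by positivity) (by linarith), by field_simp [hα.ne]⟩
  obtain ⟨w, hw₀, hw₁, hwt⟩ : ∃ w, w₀ < w ∧ 1 ≤ w ∧ t + 1 ≤ w :=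
    ⟨max w₀ 1 + 1 + t, by linarith [le_max_left w₀ 1], by linarith [le_max_right w₀ 1],
      by linarith [le_max_right w₀ 1]⟩
  refine ⟨w, hw₀, ?_⟩
  have hαw : α * w + S < 0 := by nlinarith
  have hw : w ≤ w ^ 2 := by nlinarith
  calc α * w ^ 3 + β * w ^ 2 + c * w + d
      ≤ α * w ^ 3 + |β| * w ^ 2 + |c| * w ^ 2 + |d| * w ^ 2 := by
        nlinarith [le_abs_self β, le_abs_self c, le_abs_self d, abs_nonneg c, abs_nonneg d,
          sq_nonneg w]
    _ = w ^ 2 * (α * w + S) := by ring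
    _ < 0 := mul_neg_of_pos_of_neg (by positivity) hαw

section ThreeZeros

variable {b₁ b₂ c₁ c₂ γ u v : ℝ}

lemma hfun_mul_sq (w : ℝ) (hw : w ≠ 0) :
    hfun (b₁ * u + c₁ * v) (b₂ * u + c₂ * v) b₁ b₂ c₁ c₂ γ w (u * v) * w ^ 2 =
      (w - u) * hCubic b₁ b₂ c₁ c₂ γ u v w := by
  unfold hfun hCubic
  field_simp
  ring

lemma exists_hCubic_eq (hb₁ : 0 < b₁) (hc₂ : 0 < c₂) (hγ : 0 < γ) (hu : 0 < u) (hv : 0 < v)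
    (hmid : 0 < -b₁ * u ^ 2 + (c₁ + γ * b₂) * u * v - γ * c₂ * v ^ 2) :
    ∃ z₁ z₃ k, 0 < z₁ ∧ z₁ < u ∧ u < z₃ ∧ k < 0 ∧
      ∀ w, hCubic b₁ b₂ c₁ c₂ γ u v w = (w - z₁) * (w - z₃) * (k - b₁ * w) := by
  have hcont : Continuous (hCubic b₁ b₂ c₁ c₂ γ u v) := by unfold hCubic; fun_prop
  have hQ0 : hCubic b₁ b₂ c₁ c₂ γ u v 0 < 0 := by
    have : 0 < γ * c₂ * u * v ^ 2 := by positivity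
    simp only [hCubic]; linarith
  have hQu : 0 < hCubic b₁ b₂ c₁ c₂ γ u v u := by
    have : hCubic b₁ b₂ c₁ c₂ γ u v u =
        u * (-b₁ * u ^ 2 + (c₁ + γ * b₂) * u * v - γ * c₂ * v ^ 2) := by
      simp only [hCubic]; ring
    rw [this]; positivity
  obtain ⟨M, huM, hQM⟩ := exists_gt_cubic_neg (neg_neg_of_pos hb₁) (c₁ * v) (γ * b₂ * u * v)
    (-(γ * c₂ * u * v ^ 2)) u
  obtain ⟨z₁, ⟨hz₁, hz₁u⟩, hQz₁⟩ :=
    intermediate_value_Ioo hu.le hcont.continuousOn ⟨hQ0, hQu⟩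
  obtain ⟨z₃, ⟨huz₃, -⟩, hQz₃⟩ :=
    intermediate_value_Ioo' huM.le hcont.continuousOn ⟨by simp only [hCubic]; linarith, hQu⟩
  have hfac (w : ℝ) : hCubic b₁ b₂ c₁ c₂ γ u v w =
      (w - z₁) * (w - z₃) * (c₁ * v - b₁ * (z₁ + z₃) - b₁ * w) := by
    have := cubic_eq_mul_of_roots (α := -b₁) (β := c₁ * v) (c := γ * b₂ * u * v)
      (d := -(γ * c₂ * u * v ^ 2)) (hz₁u.trans huz₃).ne
      (by simp only [hCubic] at hQz₁; linarith) (by simp only [hCubic] at hQz₃; linarith) w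
    simp only [hCubic]; linarith
  refine ⟨z₁, z₃, _, hz₁, hz₁u, huz₃, ?_, hfac⟩
  have hz : 0 < z₁ * z₃ := by nlinarith
  have := hfac 0
  nlinarith

theorem hfun_sign_pattern (hb₁ : 0 < b₁) (hc₂ : 0 < c₂) (hγ : 0 < γ) (hu : 0 < u) (hv : 0 < v)
    (hmid : 0 < -b₁ * u ^ 2 + (c₁ + γ * b₂) * u * v - γ * c₂ * v ^ 2) :
    let h := fun w ↦ hfun (b₁ * u + c₁ * v) (b₂ * u + c₂ * v) b₁ b₂ c₁ c₂ γ w (u * v)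
    h u = 0 ∧ ∃ z₁ z₃ : ℝ, 0 < z₁ ∧ z₁ < u ∧ u < z₃ ∧
      (∀ w ∈ Ioo 0 z₁ ∪ Ioo u z₃, 0 < h w) ∧ (∀ w ∈ Ioo z₁ u ∪ Ioi z₃, h w < 0) := by
  intro h
  obtain ⟨z₁, z₃, k, hz₁, hz₁u, huz₃, hk, hfac⟩ := exists_hCubic_eq hb₁ hc₂ hγ hu hv hmid
  have hh (w : ℝ) (hw : 0 < w) :
      h w = (w - z₁) * (w - u) * (w - z₃) * (k - b₁ * w) / w ^ 2 := by
    rw [eq_div_iff (by positivity), hfun_mul_sq w hw.ne', hfac]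
    ring
  have hkw (w : ℝ) (hw : 0 < w) : k - b₁ * w < 0 := by nlinarith
  refine ⟨by simp [hh u hu], z₁, z₃, hz₁, hz₁u, huz₃, ?_, ?_⟩
  · rintro w (⟨hw, hwz₁⟩ | ⟨huw, hwz₃⟩)
    · rw [hh w hw]
      refine div_pos (mul_pos_of_neg_of_neg (mul_neg_of_pos_of_neg (mul_pos_of_neg_of_neg
        ?_ ?_) ?_) (hkw w hw)) (pow_pos hw 2) <;> linarith
    · have hw : 0 < w := hu.trans huw
      rw [hh w hw]
      refine div_pos (mul_pos_of_neg_of_neg (mul_neg_of_pos_of_neg (mul_pos ?_ ?_) ?_)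
        (hkw w hw)) (pow_pos hw 2) <;> linarith
  · rintro w (⟨hz₁w, hwu⟩ | hz₃w)
    · have hw : 0 < w := hz₁.trans hz₁w
      rw [hh w hw]
      refine div_neg_of_neg_of_pos (mul_neg_of_pos_of_neg (mul_pos_of_neg_of_neg
        (mul_neg_of_pos_of_neg ?_ ?_) ?_) (hkw w hw)) (pow_pos hw 2) <;> linarith
    · have hw : 0 < w := by linarith [mem_Ioi.mp hz₃w]
      rw [hh w hw]
      refine div_neg_of_neg_of_pos (mul_neg_of_pos_of_neg (mul_pos (mul_pos ?_ ?_) ?_)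
        (hkw w hw)) (pow_pos hw 2) <;> linarith [mem_Ioi.mp hz₃w]

end ThreeZeros

section Coexistence

variable {a₁ a₂ b₁ b₂ c₁ c₂ : ℝ}

lemma coexistence_pos (ha₂ : 0 < a₂) (hb₂ : 0 < b₂) (hc₂ : 0 < c₂)
    (hcase : (c₁ / c₂ < a₁ / a₂ ∧ a₁ / a₂ < b₁ / b₂) ∨
      (b₁ / b₂ < a₁ / a₂ ∧ a₁ / a₂ < c₁ / c₂)) :
    0 < (a₁ * c₂ - a₂ * c₁) / (b₁ * c₂ - b₂ * c₁) ∧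
      0 < (b₁ * a₂ - b₂ * a₁) / (b₁ * c₂ - b₂ * c₁) := by
  rcases hcase with ⟨hCA, hAB⟩ | ⟨hBA, hAC⟩
  · have hCB := (div_lt_div_iff₀ hc₂ hb₂).mp (hCA.trans hAB)
    rw [div_lt_div_iff₀ hc₂ ha₂] at hCA
    rw [div_lt_div_iff₀ ha₂ hb₂] at hAB
    constructor <;> apply div_pos <;> linarith
  · have hBC := (div_lt_div_iff₀ hb₂ hc₂).mp (hBA.trans hAC)
    rw [div_lt_div_iff₀ hb₂ ha₂] at hBA
    rw [div_lt_div_iff₀ ha₂ hc₂] at hAC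
    constructor <;> apply div_pos_of_neg_of_neg <;> linarith

lemma coexistence_eqs {u v : ℝ} (hE : b₁ * c₂ - b₂ * c₁ ≠ 0)
    (hu : u = (a₁ * c₂ - a₂ * c₁) / (b₁ * c₂ - b₂ * c₁))
    (hv : v = (b₁ * a₂ - b₂ * a₁) / (b₁ * c₂ - b₂ * c₁)) :
    a₁ = b₁ * u + c₁ * v ∧ a₂ = b₂ * u + c₂ * v := by
  subst hu hv
  constructor <;> rw [mul_div_assoc', mul_div_assoc', ← add_div, eq_div_iff hE] <;> ring

lemma mul_D_eq {γ u v : ℝ} (ha₂ : a₂ ≠ 0) (hb₂ : b₂ ≠ 0) (hc₂ : c₂ ≠ 0)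
    (h₁ : a₁ = b₁ * u + c₁ * v) (h₂ : a₂ = b₂ * u + c₂ * v) :
    a₂ ^ 2 * b₂ * c₂ * (γ * b₂ * (a₁ / a₂ - b₁ / b₂) * (b₁ / b₂ + c₁ / c₂ - 2 * (a₁ / a₂)) +
        c₂ * (c₁ / c₂ - a₁ / a₂) * (a₁ / a₂ * (b₁ / b₂ + c₁ / c₂) - 2 * (b₁ / b₂) * (c₁ / c₂))) =
      (b₁ * c₂ - b₂ * c₁) ^ 2 * (-b₁ * u ^ 2 + (c₁ + γ * b₂) * u * v - γ * c₂ * v ^ 2) := by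
  subst h₁ h₂
  field_simp
  ring

end Coexistence

theorem stmt_18_general (a₁ a₂ b₁ b₂ c₁ c₂ γ : ℝ)
    (ha₂ : 0 < a₂) (hb₁ : 0 < b₁) (hb₂ : 0 < b₂)
    (hc₂ : 0 < c₂) (hγ : 0 < γ)
    (hcase : (c₁ / c₂ < a₁ / a₂ ∧ a₁ / a₂ < b₁ / b₂) ∨
             (b₁ / b₂ < a₁ / a₂ ∧ a₁ / a₂ < c₁ / c₂))
    (hD : 0 < γ * b₂ * (a₁ / a₂ - b₁ / b₂) * (b₁ / b₂ + c₁ / c₂ - 2 * (a₁ / a₂)) +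
        c₂ * (c₁ / c₂ - a₁ / a₂) *
          (a₁ / a₂ * (b₁ / b₂ + c₁ / c₂) - 2 * (b₁ / b₂) * (c₁ / c₂)))
    (ustar vstar τstar : ℝ)
    (hustar : ustar = (a₁ * c₂ - a₂ * c₁) / (b₁ * c₂ - b₂ * c₁))
    (hvstar : vstar = (b₁ * a₂ - b₂ * a₁) / (b₁ * c₂ - b₂ * c₁))
    (hτstar : τstar = ustar * vstar) :
    hfun a₁ a₂ b₁ b₂ c₁ c₂ γ ustar τstar = 0 ∧
    ∃ z₁ z₃ : ℝ, 0 < z₁ ∧ z₁ < ustar ∧ ustar < z₃ ∧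
      (∀ u : ℝ, u ∈ Ioo 0 z₁ ∪ Ioo ustar z₃ →
        0 < hfun a₁ a₂ b₁ b₂ c₁ c₂ γ u τstar) ∧
      (∀ u : ℝ, u ∈ Ioo z₁ ustar ∪ Ioi z₃ →
        hfun a₁ a₂ b₁ b₂ c₁ c₂ γ u τstar < 0) := by
  obtain ⟨hu, hv⟩ := coexistence_pos ha₂ hb₂ hc₂ hcase
  have hE : b₁ * c₂ - b₂ * c₁ ≠ 0 := fun hE ↦ by simp [hE] at hu
  rw [← hustar] at hu
  rw [← hvstar] at hv
  obtain ⟨h₁, h₂⟩ := coexistence_eqs hE hustar hvstar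
  have hmid : 0 < -b₁ * ustar ^ 2 + (c₁ + γ * b₂) * ustar * vstar - γ * c₂ * vstar ^ 2 := by
    refine pos_of_mul_pos_right ?_ (sq_nonneg (b₁ * c₂ - b₂ * c₁))
    rw [← mul_D_eq ha₂.ne' hb₂.ne' hc₂.ne' h₁ h₂]
    exact mul_pos (by positivity) hD
  rw [h₁, h₂, hτstar]
  exact hfun_sign_pattern hb₁ hc₂ hγ hu hv hmid

/-- First assertion of Lemma 6.8: if `C < A < B` or `B < A < C` and `D > 0`, then
with `τ* = u*v*` one has `h(u*, τ*) = 0` and `h(·, τ*)` has exactly three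
positive zeros, `u*` being the middle one. -/
theorem stmt_18 (a₁ a₂ b₁ b₂ c₁ c₂ γ δ : ℝ)
    (ha₁ : 0 < a₁) (ha₂ : 0 < a₂) (hb₁ : 0 < b₁) (hb₂ : 0 < b₂)
    (hc₁ : 0 < c₁) (hc₂ : 0 < c₂) (hγ : 0 < γ) (hδ : 0 < δ)
    (hcase : (c₁ / c₂ < a₁ / a₂ ∧ a₁ / a₂ < b₁ / b₂) ∨
             (b₁ / b₂ < a₁ / a₂ ∧ a₁ / a₂ < c₁ / c₂))
    (hD : 0 < γ * b₂ * (a₁ / a₂ - b₁ / b₂) * (b₁ / b₂ + c₁ / c₂ - 2 * (a₁ / a₂)) +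
        c₂ * (c₁ / c₂ - a₁ / a₂) *
          (a₁ / a₂ * (b₁ / b₂ + c₁ / c₂) - 2 * (b₁ / b₂) * (c₁ / c₂)))
    (ustar vstar τstar : ℝ)
    (hustar : ustar = (a₁ * c₂ - a₂ * c₁) / (b₁ * c₂ - b₂ * c₁))
    (hvstar : vstar = (b₁ * a₂ - b₂ * a₁) / (b₁ * c₂ - b₂ * c₁))
    (hτstar : τstar = ustar * vstar) :
    hfun a₁ a₂ b₁ b₂ c₁ c₂ γ ustar τstar = 0 ∧
    ∃ z₁ z₃ : ℝ, 0 < z₁ ∧ z₁ < ustar ∧ ustar < z₃ ∧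
      (∀ u : ℝ, u ∈ Ioo 0 z₁ ∪ Ioo ustar z₃ →
        0 < hfun a₁ a₂ b₁ b₂ c₁ c₂ γ u τstar) ∧
      (∀ u : ℝ, u ∈ Ioo z₁ ustar ∪ Ioi z₃ →
        hfun a₁ a₂ b₁ b₂ c₁ c₂ γ u τstar < 0) :=
  stmt_18_general a₁ a₂ b₁ b₂ c₁ c₂ γ ha₂ hb₁ hb₂ hc₂ hγ hcase hD ustar vstar τstar hustar hvstar
    hτstar
end
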